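/- For every nonzero complex number u, the matrix L_u has characteristic polynomial (X − u)³(X − u⁻³) and is not diagonalizable; its eigenvalues are u (with algebraic multiplicity 3) and u⁻³. -/

import Mathlib

open Matrix Polynomial

private lemma eval_charpoly' (M : Matrix (Fin 4) (Fin 4) ℂ) (x : ℂ) :
    M.charpoly.eval x = (x • (1 : Matrix (Fin 4) (Fin 4) ℂ) - M).det := by
  rw [Matrix.charpoly, ← coe_evalRingHom, RingHom.map_det]
  congr 1
  ext i j
  by_cases h : i = j
  · subst h; simp [charmatrix_apply_eq, Matrix.one_apply]
  · simp [charmatrix_apply_ne _ _ _ h, Matrix.one_apply, h]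

private lemma det_fin_four' (A : Matrix (Fin 4) (Fin 4) ℂ) :
    A.det = A 0 0*(A 1 1*(A 2 2*A 3 3 - A 2 3*A 3 2) - A 1 2*(A 2 1*A 3 3 - A 2 3*A 3 1) + A 1 3*(A 2 1*A 3 2 - A 2 2*A 3 1))
          - A 0 1*(A 1 0*(A 2 2*A 3 3 - A 2 3*A 3 2) - A 1 2*(A 2 0*A 3 3 - A 2 3*A 3 0) + A 1 3*(A 2 0*A 3 2 - A 2 2*A 3 0))
          + A 0 2*(A 1 0*(A 2 1*A 3 3 - A 2 3*A 3 1) - A 1 1*(A 2 0*A 3 3 - A 2 3*A 3 0) + A 1 3*(A 2 0*A 3 1 - A 2 1*A 3 0))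
          - A 0 3*(A 1 0*(A 2 1*A 3 2 - A 2 2*A 3 1) - A 1 1*(A 2 0*A 3 2 - A 2 2*A 3 0) + A 1 2*(A 2 0*A 3 1 - A 2 1*A 3 0)) := by
  rw [Matrix.det_succ_row_zero]
  simp [Fin.sum_univ_succ, Matrix.det_fin_three, Fin.succAbove, Matrix.submatrix_apply,
    Fin.succ, Fin.castSucc, Fin.castAdd, Fin.castLE]
  ring

/-- The matrix `L_u` (with `ū = u⁻¹`). -/
noncomputable def Lmat (u : ℂ) : Matrix (Fin 4) (Fin 4) ℂ :=
  let c : ℂ := u⁻¹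
  !![(u - 1 - c - c^2)/2, (u + 1 + c + c^2)/2, -1 - c^2, (5*u + 6 + 2*c + 3*c^2)/2;
     (u - 1 - c - c^2 - 2*c^3)/2, (u + 1 + c + c^2 + 2*c^3)/2, 1 - 2*c + c^2 - 2*c^3,
       (7*u + 4 + 10*c + c^2 + 6*c^3)/2;
     0, 0, u, 0;
     0, 0, 0, u]

private lemma smul_one_sub_Lmat (u x : ℂ) :
    x • (1 : Matrix (Fin 4) (Fin 4) ℂ) - Lmat u =
    !![x - (u - 1 - u⁻¹ - u⁻¹^2)/2, -((u + 1 + u⁻¹ + u⁻¹^2)/2), -(-1 - u⁻¹^2), -((5*u + 6 + 2*u⁻¹ + 3*u⁻¹^2)/2);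
       -((u - 1 - u⁻¹ - u⁻¹^2 - 2*u⁻¹^3)/2), x - (u + 1 + u⁻¹ + u⁻¹^2 + 2*u⁻¹^3)/2, -(1 - 2*u⁻¹ + u⁻¹^2 - 2*u⁻¹^3),
         -((7*u + 4 + 10*u⁻¹ + u⁻¹^2 + 6*u⁻¹^3)/2);
       0, 0, x - u, 0;
       0, 0, 0, x - u] := by
  ext i j
  fin_cases i <;> fin_cases j <;>
    simp [Lmat, Matrix.one_apply, Matrix.vecHead, Matrix.vecTail]

private lemma charpoly_Lmat (u : ℂ) :
    (Lmat u).charpoly = (X - C u)^3 * (X - C (u⁻¹^3)) := by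
  apply Polynomial.funext
  intro x
  rw [eval_charpoly', smul_one_sub_Lmat, det_fin_four']
  simp only [Matrix.cons_val', Matrix.cons_val_zero, Matrix.cons_val_one, Matrix.head_cons,
    Matrix.empty_val', Matrix.cons_val_fin_one, Matrix.head_fin_const,
    Matrix.cons_val_two, Matrix.cons_val_three, Matrix.tail_cons, Matrix.of_apply,
    eval_mul, eval_pow, eval_sub, eval_X, eval_C]
  ring

/-- For nonzero `u`, `L_u` has characteristic polynomial
`(X - u)³ (X - u⁻³)` (so its eigenvalues are `u` with multiplicity 3 and `u⁻³`),
and for `u ≠ 1` it is not diagonalizable. -/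
theorem stmt9 (u : ℂ) (hu : u ≠ 0) :
    (Lmat u).charpoly = (X - C u)^3 * (X - C (u⁻¹^3)) ∧
    (u ≠ 1 →
      ¬ ∃ (g : GL (Fin 4) ℂ) (d : Fin 4 → ℂ),
        Lmat u = (g : Matrix (Fin 4) (Fin 4) ℂ) * Matrix.diagonal d *
          ((g⁻¹ : GL (Fin 4) ℂ) : Matrix (Fin 4) (Fin 4) ℂ)) := by
  have hc : u * u⁻¹ = 1 := mul_inv_cancel₀ hu
  refine ⟨charpoly_Lmat u, fun hu1 ⟨g, d, hgd⟩ => ?_⟩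
  set G : Matrix (Fin 4) (Fin 4) ℂ := (g : Matrix (Fin 4) (Fin 4) ℂ) with hG
  set Gi : Matrix (Fin 4) (Fin 4) ℂ := ((g⁻¹ : GL (Fin 4) ℂ) : Matrix (Fin 4) (Fin 4) ℂ) with hGi
  have hGGi : G * Gi = 1 := Units.mul_inv g
  have hGiG : Gi * G = 1 := Units.inv_mul g
  set w : ℂ := u⁻¹ ^ 3 with hw
  -- each diagonal entry is u or w
  have hdi : ∀ i, d i = u ∨ d i = w := by
    intro i
    have e1 : ((Lmat u).charpoly).eval (d i) = (d i - u)^3 * (d i - w) := by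
      rw [charpoly_Lmat u]
      simp only [eval_mul, eval_pow, eval_sub, eval_X, eval_C]
      rw [hw]
    have e2 : ((Lmat u).charpoly).eval (d i) = 0 := by
      rw [eval_charpoly', hgd]
      have hdg : Matrix.diagonal (fun j => d i - d j)
          = d i • (1 : Matrix (Fin 4) (Fin 4) ℂ) - Matrix.diagonal d := by
        rw [Matrix.smul_one_eq_diagonal, ← Matrix.diagonal_sub]
      have key : d i • (1 : Matrix (Fin 4) (Fin 4) ℂ) - G * Matrix.diagonal d * Gi
          = G * (Matrix.diagonal (fun j => d i - d j)) * Gi := by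
        rw [hdg]
        simp only [Matrix.mul_sub, Matrix.sub_mul, mul_smul_comm, smul_mul_assoc,
          Matrix.mul_one, hGGi]
      rw [key, Matrix.det_mul, Matrix.det_mul, Matrix.det_diagonal]
      have hz : ∏ j, (d i - d j) = 0 :=
        Finset.prod_eq_zero (Finset.mem_univ i) (sub_self _)
      rw [hz]; ring
    rw [e1] at e2
    rcases mul_eq_zero.mp e2 with h | h
    · exact Or.inl (sub_eq_zero.mp (pow_eq_zero_iff (by norm_num : (3:ℕ) ≠ 0) |>.mp h))
    · exact Or.inr (sub_eq_zero.mp h)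
  -- the product (L - u)(L - w) vanishes
  have hA : Lmat u - u • (1 : Matrix (Fin 4) (Fin 4) ℂ)
      = G * (Matrix.diagonal d - u • 1) * Gi := by
    rw [hgd]
    simp only [Matrix.mul_sub, Matrix.sub_mul, mul_smul_comm, smul_mul_assoc,
      Matrix.mul_one, hGGi]
  have hB : Lmat u - w • (1 : Matrix (Fin 4) (Fin 4) ℂ)
      = G * (Matrix.diagonal d - w • 1) * Gi := by
    rw [hgd]
    simp only [Matrix.mul_sub, Matrix.sub_mul, mul_smul_comm, smul_mul_assoc,
      Matrix.mul_one, hGGi]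
  have hmid : (Matrix.diagonal d - u • (1 : Matrix (Fin 4) (Fin 4) ℂ))
      * (Matrix.diagonal d - w • 1) = 0 := by
    have h1 : Matrix.diagonal d - u • (1 : Matrix (Fin 4) (Fin 4) ℂ)
        = Matrix.diagonal (fun j => d j - u) := by
      rw [Matrix.smul_one_eq_diagonal, ← Matrix.diagonal_sub]
    have h2 : Matrix.diagonal d - w • (1 : Matrix (Fin 4) (Fin 4) ℂ)
        = Matrix.diagonal (fun j => d j - w) := by
      rw [Matrix.smul_one_eq_diagonal, ← Matrix.diagonal_sub]
    rw [h1, h2, Matrix.diagonal_mul_diagonal]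
    have : (fun j => (d j - u) * (d j - w)) = fun _ => (0:ℂ) := by
      funext j
      rcases hdi j with h | h <;> rw [h] <;> ring
    rw [this, Matrix.diagonal_zero]
  have hN : (Lmat u - u • (1 : Matrix (Fin 4) (Fin 4) ℂ)) * (Lmat u - w • 1) = 0 := by
    rw [hA, hB]
    simp only [Matrix.mul_assoc]
    rw [← Matrix.mul_assoc Gi G, hGiG, Matrix.one_mul,
      ← Matrix.mul_assoc (Matrix.diagonal d - u • 1), hmid]
    simp
  have h03 : ((Lmat u - u • (1 : Matrix (Fin 4) (Fin 4) ℂ)) * (Lmat u - w • 1)) 0 3 = 0 := by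
    rw [hN]; rfl
  rw [Matrix.mul_apply, Fin.sum_univ_four] at h03
  simp [Lmat, Matrix.one_apply] at h03
  -- deduce u³+u²+u+1 = 0
  have hq : u^3 + u^2 + u + 1 = 0 := by
    rw [hw] at h03
    linear_combination (u/3) * h03 - (u*(7/2 + (3/2)*u⁻¹ - u⁻¹^2)/3 + 1) * hc
  have hu4 : u^4 = 1 := by linear_combination (u-1)*hq
  have hinv : u⁻¹ = u^3 := inv_eq_of_mul_eq_one_right (by linear_combination hu4)
  have hwu : w = u := by rw [hw, hinv]; linear_combination (u^5+u)*hu4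
  have hdu : ∀ i, d i = u := by
    intro i
    rcases hdi i with h | h
    · exact h
    · rw [hwu] at h; exact h
  have hD : Matrix.diagonal d = u • (1 : Matrix (Fin 4) (Fin 4) ℂ) := by
    rw [show d = (fun _ => u) from funext hdu, Matrix.smul_one_eq_diagonal]
  have hL : Lmat u = u • (1 : Matrix (Fin 4) (Fin 4) ℂ) := by
    rw [hgd, hD, mul_smul_comm, Matrix.mul_one, smul_mul_assoc, hGGi]
  have h03' : Lmat u 0 3 = 0 := by rw [hL]; simp [Matrix.one_apply]
  simp only [Lmat, Matrix.cons_val', Matrix.cons_val_zero, Matrix.cons_val_one,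
    Matrix.head_cons, Matrix.empty_val', Matrix.cons_val_fin_one, Matrix.head_fin_const,
    Matrix.cons_val_three, Matrix.tail_cons, Matrix.of_apply] at h03'
  have hr : 5*u^3 + 6*u^2 + 2*u + 3 = 0 := by
    linear_combination 2*u^2*h03' + (-2*u - 3*u*u⁻¹ - 3)*hc
  have h12 : (12:ℂ) = 0 := by
    linear_combination (-25*u^2 - 15*u + 3)*hq + (5*u^2 + 2*u + 3)*hr
  norm_num at h12
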